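/- Let K ⊆ ℝ^n be a closed convex cone. Then the affine hull of its polar satisfies aff(K°) = (lin(K))^⊥, where lin(K) = K ∩ (−K) is the lineality space of K. -/

import Mathlib

open Matrix Set MeasureTheory
open scoped RealInnerProductSpace

noncomputable section

/-- `E d` is Euclidean space `ℝ^d`. -/
abbrev E (d : ℕ) := EuclideanSpace ℝ (Fin d)

/-- Matrix-vector multiplication as a map between Euclidean spaces. -/
def mulVecE {m n : ℕ} (B : Matrix (Fin m) (Fin n) ℝ) (y : E n) : E m :=
  Matrix.toEuclideanLin B y

/-- The polar of a set `K`: `K° = {v | ⟪v, w⟫ ≤ 0 for all w ∈ K}`. -/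
def polarCone {d : ℕ} (K : Set (E d)) : Set (E d) :=
  {v | ∀ w ∈ K, ⟪v, w⟫ ≤ 0}

/-- The horizon cone of `C`: directions `x` with `w + τ • x ∈ C` for all `w ∈ C`, `τ ≥ 0`. -/
def horizonCone {d : ℕ} (C : Set (E d)) : Set (E d) :=
  {x | ∀ w ∈ C, ∀ τ : ℝ, 0 ≤ τ → w + τ • x ∈ C}

/-- The null space of a matrix `M`, as a set of vectors. -/
def nullSet {d : ℕ} (M : Matrix (Fin d) (Fin d) ℝ) : Set (E d) :=
  {w | mulVecE M w = 0}

/-- A set is polyhedral if it is of the form `{u | Aᵀ u ≤ a}` (componentwise). -/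
def IsPolyhedral {d : ℕ} (U : Set (E d)) : Prop :=
  ∃ (k : ℕ) (A : Matrix (Fin d) (Fin k) ℝ) (a : Fin k → ℝ),
    U = {u | ∀ i, mulVecE Aᵀ u i ≤ a i}

/-- The piecewise linear-quadratic penalty
`θ_{U,M}(w) = sup_{u ∈ U} (⟪u, w⟫ - (1/2) ⟪u, M u⟫)`, valued in `ℝ ∪ {±∞}`. -/
def theta {m : ℕ} (U : Set (E m)) (M : Matrix (Fin m) (Fin m) ℝ) (w : E m) : EReal :=
  ⨆ u ∈ U, ((⟪u, w⟫ - (1 / 2) * ⟪u, mulVecE M u⟫ : ℝ) : EReal)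

/-- `cone U = {t • u | u ∈ U, t ≥ 0}`. -/
def coneOf {d : ℕ} (U : Set (E d)) : Set (E d) :=
  {w | ∃ u ∈ U, ∃ t : ℝ, 0 ≤ t ∧ w = t • u}

/-- A function `ρ : ℝ^n → ℝ ∪ {+∞}` is coercive if `ρ(y) → +∞` as `‖y‖ → ∞`. -/
def Coercive {n : ℕ} (ρ : E n → EReal) : Prop :=
  ∀ C : ℝ, ∃ R : ℝ, ∀ y : E n, R ≤ ‖y‖ → (C : EReal) ≤ ρ y

/-!
Since `0 ∈ K°`, the affine hull of `K°` is its linear span, which in finite dimension is the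
orthogonal complement of its own orthogonal complement. A vector `x` is orthogonal to `K°` iff both
`x` and `-x` lie in the bipolar `K°°`, and `K°° = K` for a closed convex cone (Farkas' lemma);
hence `(span K°)ᗮ = K ∩ -K`.
-/

theorem Convex.add_mem_of_smul_mem {𝕜 V : Type*} [Field 𝕜] [LinearOrder 𝕜] [IsStrictOrderedRing 𝕜]
    [AddCommGroup V] [Module 𝕜 V] {K : Set V} (hconvex : Convex 𝕜 K)
    (hcone : ∀ t : 𝕜, 0 ≤ t → ∀ w ∈ K, t • w ∈ K) {x y : V} (hx : x ∈ K) (hy : y ∈ K) :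
    x + y ∈ K := by
  have hmid : (2⁻¹ : 𝕜) • x + (2⁻¹ : 𝕜) • y ∈ K :=
    hconvex hx hy (by positivity) (by positivity) (by norm_num)
  simpa [smul_add, smul_smul] using hcone 2 zero_le_two _ hmid

def ProperCone.ofConvex {V : Type*} [AddCommGroup V] [Module ℝ V] [TopologicalSpace V]
    (K : Set V) (hne : K.Nonempty) (hclosed : IsClosed K) (hconvex : Convex ℝ K)
    (hcone : ∀ t : ℝ, 0 ≤ t → ∀ w ∈ K, t • w ∈ K) : ProperCone ℝ V where
  carrier := K
  add_mem' hx hy := hconvex.add_mem_of_smul_mem hcone hx hy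
  zero_mem' := by
    obtain ⟨w, hw⟩ := hne
    simpa using hcone 0 le_rfl w hw
  smul_mem' c _ hw := hcone c c.2 _ hw
  isClosed' := hclosed

section InnerProductSpace

variable {V : Type*} [NormedAddCommGroup V] [InnerProductSpace ℝ V]

theorem Submodule.mem_orthogonal_span_iff {s : Set V} {x : V} :
    x ∈ (span ℝ s)ᗮ ↔ ∀ u ∈ s, ⟪u, x⟫ = 0 := by
  rw [← span_singleton_le_iff_mem, ← isOrtho_iff_le, isOrtho_comm, isOrtho_span]
  simp

theorem ProperCone.orthogonal_span_innerDual [CompleteSpace V] (C : ProperCone ℝ V) :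
    (Submodule.span ℝ (innerDual (C : Set V) : Set V))ᗮ = C.toPointedCone.lineal := by
  have hbipolar (z : V) : z ∈ C ↔ ∀ y ∈ innerDual (C : Set V), 0 ≤ ⟪y, z⟫ :=
    (SetLike.ext_iff.mp (innerDual_innerDual C) z).symm
  ext x
  rw [Submodule.mem_orthogonal_span_iff, PointedCone.mem_lineal, mem_toPointedCone,
    mem_toPointedCone, hbipolar, hbipolar]
  simp only [inner_neg_right, Left.nonneg_neg_iff]
  exact ⟨fun h => ⟨fun y hy => (h y hy).ge, fun y hy => (h y hy).le⟩,
    fun h y hy => le_antisymm (h.2 y hy) (h.1 y hy)⟩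

end InnerProductSpace

theorem zero_mem_polarCone {d : ℕ} (K : Set (E d)) : (0 : E d) ∈ polarCone K := by
  simp [polarCone]

theorem polarCone_eq_neg_innerDual {d : ℕ} (K : Set (E d)) :
    polarCone K = -(ProperCone.innerDual K : Set (E d)) := by
  ext v
  simp [polarCone, real_inner_comm]

/-- for a closed convex cone K, aff (K_polar) = (lin K)-perp,
where lin K = K ∩ -K. -/
theorem affine_hull_of_polar {n : ℕ}
    (K : Set (E n)) (hKclosed : IsClosed K) (hKconvex : Convex ℝ K)
    (hKcone : ∀ t : ℝ, 0 ≤ t → ∀ w ∈ K, t • w ∈ K) :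
    (affineSpan ℝ (polarCone K) : Set (E n)) =
      ((Submodule.span ℝ (K ∩ -K))ᗮ : Set (E n)) := by
  rcases K.eq_empty_or_nonempty with rfl | hne
  · simp [polarCone]
  let C := ProperCone.ofConvex K hne hKclosed hKconvex hKcone
  -- `C` has carrier `K`, so `C.lineal` is `K ∩ -K` as a set by definition.
  have hperp : (Submodule.span ℝ (ProperCone.innerDual K : Set (E n)))ᗮ =
      Submodule.span ℝ (K ∩ -K) :=
    C.orthogonal_span_innerDual.trans (Submodule.span_eq C.toPointedCone.lineal).symm
  rw [← Set.insert_eq_self.2 (zero_mem_polarCone K), affineSpan_insert_zero,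
    polarCone_eq_neg_innerDual, Submodule.span_neg,
    ← Submodule.orthogonal_orthogonal (Submodule.span ℝ _), hperp]
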